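/- For any M, s > 0, any depth L and width vector p: every ReLU network in F_M(L,p,s) (at most s nonzero weights, all weights in [−M,M]) is equal, as a function on [0,1]^d, to a modified ReLU network in G₂(L,p,s(M+1)²), i.e. F_M(L,p,s) ⊂ G₂(L,p,s(M+1)²). -/

import Mathlib

open MeasureTheory ProbabilityTheory Finset
open scoped BigOperators Classical Pointwise

noncomputable section

/-- The ReLU activation function. -/
def relu (x : ℝ) : ℝ := max 0 x

/-- The modifier function `α` from the paper. -/
def alphaFn (x : ℝ) : ℝ := if x < -1 then x + 1 else if x ≤ 1 then 0 else x - 1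

/-- The unit cube `[0,1]^d`. -/
def cube (d : ℕ) : Set (Fin d → ℝ) := Set.Icc 0 1

/-- Collections of weight matrices for a network with width function `p`. -/
abbrev NetWeights (p : ℕ → ℕ) : Type :=
  (i : ℕ) → Matrix (Fin (p (i + 1))) (Fin (p i)) ℝ

/-- Hidden layer computations of a feedforward ReLU network. -/
def hiddenLayers (p : ℕ → ℕ) (W : NetWeights p) (x : Fin (p 0) → ℝ) :
    (k : ℕ) → Fin (p k) → ℝ
  | 0 => x
  | k + 1 => fun j => relu ((W k).mulVec (hiddenLayers p W x k) j)

/-- An ordinary feedforward ReLU network of depth `L` (real-valued output;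
the output width `p (L+1)` is assumed to be `1`, and the output is read off
by summing the coordinates of the last layer). -/
def reluNet (L : ℕ) (p : ℕ → ℕ) (W : NetWeights p) (x : Fin (p 0) → ℝ) : ℝ :=
  ∑ j, (W L).mulVec (hiddenLayers p W x L) j

/-- Apply the modifier `α` entrywise to the hidden weight matrices. -/
def modifyWeights (L : ℕ) (p : ℕ → ℕ) (V : NetWeights p) : NetWeights p :=
  fun i => if i < L then (V i).map alphaFn else V i

/-- A modified ReLU network. -/
def modNet (L : ℕ) (p : ℕ → ℕ) (V : NetWeights p) (x : Fin (p 0) → ℝ) : ℝ :=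
  reluNet L p (modifyWeights L p V) x

/-- `l₁` norm of a matrix: sum of absolute values of all entries. -/
def matL1 {m k : ℕ} (W : Matrix (Fin m) (Fin k) ℝ) : ℝ := ∑ i, ∑ j, |W i j|

/-- Squared Frobenius norm of a matrix. -/
def matL2sq {m k : ℕ} (W : Matrix (Fin m) (Fin k) ℝ) : ℝ := ∑ i, ∑ j, (W i j) ^ 2

/-- Number of nonzero entries of a matrix. -/
def matNNZ {m k : ℕ} (W : Matrix (Fin m) (Fin k) ℝ) : ℕ :=
  (Finset.univ.filter fun ij : Fin m × Fin k => W ij.1 ij.2 ≠ 0).card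

def weightsL1 (L : ℕ) (p : ℕ → ℕ) (W : NetWeights p) : ℝ :=
  ∑ i ∈ Finset.range (L + 1), matL1 (W i)

def weightsL2sq (L : ℕ) (p : ℕ → ℕ) (W : NetWeights p) : ℝ :=
  ∑ i ∈ Finset.range (L + 1), matL2sq (W i)

def weightsNNZ (L : ℕ) (p : ℕ → ℕ) (W : NetWeights p) : ℕ :=
  ∑ i ∈ Finset.range (L + 1), matNNZ (W i)

def weightsBounded (L : ℕ) (p : ℕ → ℕ) (M : ℝ) (W : NetWeights p) : Prop :=
  ∀ i ≤ L, ∀ j k, |W i j k| ≤ M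

/-- `|p|_∞ = max {p_0, ..., p_L}`. -/
def pMax (L : ℕ) (p : ℕ → ℕ) : ℕ := (Finset.range (L + 1)).sup p

/-- The class `F_M(L,p,s)`: ReLU networks with at most `s` nonzero weights,
all contained in `[-M, M]`, viewed as functions on `[0,1]^d`. -/
def sparseReluClass (L : ℕ) (p : ℕ → ℕ) (M s : ℝ) : Set ((Fin (p 0) → ℝ) → ℝ) :=
  {f | ∃ W : NetWeights p, (∀ x ∈ cube (p 0), f x = reluNet L p W x) ∧
        (weightsNNZ L p W : ℝ) ≤ s ∧ weightsBounded L p M W}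

/-- The class `F̃(L,p,r)`: ReLU networks with total `l₁` weight norm at most `r`. -/
def l1ReluClass (L : ℕ) (p : ℕ → ℕ) (r : ℝ) : Set ((Fin (p 0) → ℝ) → ℝ) :=
  {f | ∃ W : NetWeights p, (∀ x ∈ cube (p 0), f x = reluNet L p W x) ∧ weightsL1 L p W ≤ r}

/-- The class `G₁(L,p,r)`: modified ReLU networks with total `l₁` weight norm at most `r`. -/
def modClassL1 (L : ℕ) (p : ℕ → ℕ) (r : ℝ) : Set ((Fin (p 0) → ℝ) → ℝ) :=
  {g | ∃ V : NetWeights p, (∀ x ∈ cube (p 0), g x = modNet L p V x) ∧ weightsL1 L p V ≤ r}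

/-- The class `G₂(L,p,r)`: modified ReLU networks with total squared `l₂` weight norm at most `r`. -/
def modClassL2 (L : ℕ) (p : ℕ → ℕ) (r : ℝ) : Set ((Fin (p 0) → ℝ) → ℝ) :=
  {g | ∃ V : NetWeights p, (∀ x ∈ cube (p 0), g x = modNet L p V x) ∧ weightsL2sq L p V ≤ r}

/-- Partial derivative in coordinate direction `i`. -/
def pderivAlong {d : ℕ} (i : Fin d) (f : (Fin d → ℝ) → ℝ) : (Fin d → ℝ) → ℝ :=
  fun x => fderiv ℝ f x (Pi.single i 1)

/-- Multi-index partial derivative `∂^γ`. -/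
def multiPderiv {d : ℕ} (γ : Fin d → ℕ) (f : (Fin d → ℝ) → ℝ) : (Fin d → ℝ) → ℝ :=
  (List.finRange d).foldr (fun i h => (pderivAlong i)^[γ i] h) f

/-- Degree `|γ|` of a multi-index. -/
def degree {d : ℕ} (γ : Fin d → ℕ) : ℕ := ∑ i, γ i

/-- `|x - y|_∞`. -/
def supDist {d : ℕ} (x y : Fin d → ℝ) : ℝ := ⨆ i, |x i - y i|

/-- The Hölder ball `C^β_d(F)`. -/
def holderBall (d : ℕ) (β F : ℝ) : Set ((Fin d → ℝ) → ℝ) :=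
  {g | ContDiff ℝ (⌊β⌋₊ : ℕ∞) g ∧
    ∃ b h : (Fin d → ℕ) → ℝ,
      (∀ γ : Fin d → ℕ, (degree γ : ℝ) < β → ∀ x ∈ cube d, |multiPderiv γ g x| ≤ b γ) ∧
      (∀ γ : Fin d → ℕ, degree γ = ⌊β⌋₊ → ∀ x ∈ cube d, ∀ y ∈ cube d, x ≠ y →
        |multiPderiv γ g x - multiPderiv γ g y| ≤ h γ * supDist x y ^ (β - (⌊β⌋₊ : ℝ))) ∧
      (∑ᶠ (γ : Fin d → ℕ) (_ : (degree γ : ℝ) < β), b γ) +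
        (∑ᶠ (γ : Fin d → ℕ) (_ : degree γ = ⌊β⌋₊), h γ) ≤ F}

/-- `isCoverOfSize δ F N` : there is a `δ`-cover (in sup distance on `[0,1]^d`)
of the function class `F` of cardinality `N`. -/
def isCoverOfSize {d : ℕ} (δ : ℝ) (F : Set ((Fin d → ℝ) → ℝ)) (N : ℕ) : Prop :=
  ∃ fs : Fin N → (Fin d → ℝ) → ℝ, ∀ f ∈ F, ∃ k, ∀ x ∈ cube d, |f x - fs k x| ≤ δ

/-- `⌈log₂ x⌉` as a natural number. -/
def ceilLog2 (x : ℝ) : ℕ := (⌈Real.logb 2 x⌉).toNat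

/-- The width vector `(d, w, ..., w, 1)` of a network of depth `L`. -/
def widthVec (d w L : ℕ) : ℕ → ℕ
  | 0 => d
  | i + 1 => if i + 1 ≤ L then w else 1

/-- The depth `L_n = 8 + (⌈log₂ n⌉ + 5)(1 + ⌈log₂ (d ∨ β)⌉)`. -/
def Ln (d : ℕ) (β : ℝ) (n : ℕ) : ℕ :=
  8 + (Nat.clog 2 n + 5) * (1 + ceilLog2 (max (d : ℝ) β))

/-- `N_n = ⌈n^{d/(2β+d)}⌉`. -/
def Nn (d : ℕ) (β : ℝ) (n : ℕ) : ℕ := ⌈(n : ℝ) ^ ((d : ℝ) / (2 * β + d))⌉₊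

/-- The hidden width `6(d + ⌈β⌉) N_n`. -/
def wn (d : ℕ) (β : ℝ) (n : ℕ) : ℕ := 6 * (d + ⌈β⌉₊) * Nn d β n

/-- The width vector `p_n = (d, 6(d+⌈β⌉)⌈n^{d/(2β+d)}⌉, ..., 6(d+⌈β⌉)⌈n^{d/(2β+d)}⌉, 1)`. -/
def pn (d : ℕ) (β : ℝ) (n : ℕ) : ℕ → ℕ := widthVec d (wn d β n) (Ln d β n)

end

/-- Since `alphaFn` is the identity shifted towards `0` by one off `[-1, 1]`, every weight has
a preimage under it of absolute value at most one more; lifting `0` to `0` keeps the sparsity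
pattern, so each nonzero weight bounded by `M` costs at most `(M + 1) ^ 2` in squared norm. -/
noncomputable def liftWeight (w : ℝ) : ℝ := if 0 < w then w + 1 else if w < 0 then w - 1 else 0

lemma alphaFn_liftWeight (w : ℝ) : alphaFn (liftWeight w) = w := by
  unfold alphaFn liftWeight
  split_ifs <;> linarith

@[simp]
lemma liftWeight_zero : liftWeight 0 = 0 := by simp [liftWeight]

lemma abs_liftWeight_le (w : ℝ) : |liftWeight w| ≤ |w| + 1 := by
  unfold liftWeight
  split_ifs with hpos hneg
  · rw [abs_of_pos hpos, abs_of_pos (by linarith)]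
  · rw [abs_of_neg hneg, abs_of_neg (by linarith)]; linarith
  · simp [abs_nonneg, add_nonneg]

lemma matL2sq_le_of_support_subset {m k : ℕ} {A B : Matrix (Fin m) (Fin k) ℝ} {C : ℝ}
    (hsupp : ∀ i j, B i j = 0 → A i j = 0) (hbound : ∀ i j, |A i j| ≤ C) :
    matL2sq A ≤ C ^ 2 * matNNZ B := by
  calc matL2sq A = ∑ ij : Fin m × Fin k, A ij.1 ij.2 ^ 2 := (Fintype.sum_prod_type' _).symm
    _ = ∑ ij ∈ univ.filter (fun ij : Fin m × Fin k => B ij.1 ij.2 ≠ 0), A ij.1 ij.2 ^ 2 := by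
        refine (sum_filter_of_ne fun ij _ hA => ?_).symm
        contrapose! hA
        rw [hsupp _ _ hA, zero_pow two_ne_zero]
    _ ≤ matNNZ B • C ^ 2 :=
        sum_le_card_nsmul _ _ _ fun ij _ => sq_le_sq' (abs_le.mp (hbound _ _)).1
          (abs_le.mp (hbound _ _)).2
    _ = C ^ 2 * matNNZ B := by rw [nsmul_eq_mul, mul_comm]

noncomputable def liftWeights (L : ℕ) (p : ℕ → ℕ) (W : NetWeights p) : NetWeights p :=
  fun i => if i < L then (W i).map liftWeight else W i

lemma modifyWeights_liftWeights (L : ℕ) (p : ℕ → ℕ) (W : NetWeights p) :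
    modifyWeights L p (liftWeights L p W) = W := by
  funext i
  by_cases hi : i < L
  · ext j k
    simp [modifyWeights, liftWeights, hi, alphaFn_liftWeight]
  · simp [modifyWeights, liftWeights, hi]

lemma modNet_liftWeights (L : ℕ) (p : ℕ → ℕ) (W : NetWeights p) :
    modNet L p (liftWeights L p W) = reluNet L p W := by
  funext x
  rw [modNet, modifyWeights_liftWeights]

lemma weightsL2sq_liftWeights_le {L : ℕ} {p : ℕ → ℕ} {M : ℝ} {W : NetWeights p}
    (hW : weightsBounded L p M W) :
    weightsL2sq L p (liftWeights L p W) ≤ (M + 1) ^ 2 * weightsNNZ L p W := by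
  have hlayer : ∀ i ∈ range (L + 1),
      matL2sq (liftWeights L p W i) ≤ (M + 1) ^ 2 * matNNZ (W i) := by
    intro i hi
    have hiL : i ≤ L := Nat.lt_succ_iff.mp (mem_range.mp hi)
    apply matL2sq_le_of_support_subset
    · intro j k hzero
      by_cases h : i < L <;> simp [liftWeights, h, hzero]
    · intro j k
      by_cases h : i < L
      · simpa [liftWeights, h] using
          (abs_liftWeight_le (W i j k)).trans (by linarith [hW i hiL j k])
      · simpa [liftWeights, h] using (hW i hiL j k).trans (by linarith)
  calc weightsL2sq L p (liftWeights L p W)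
      ≤ ∑ i ∈ range (L + 1), (M + 1) ^ 2 * (matNNZ (W i) : ℝ) := sum_le_sum hlayer
    _ = (M + 1) ^ 2 * weightsNNZ L p W := by rw [← mul_sum, weightsNNZ, Nat.cast_sum]

theorem sparse_subset_modL2_general (L : ℕ) (p : ℕ → ℕ) (M s : ℝ) :
    sparseReluClass L p M s ⊆ modClassL2 L p (s * (M + 1) ^ 2) := by
  rintro f ⟨W, hfW, hnnz, hbounded⟩
  refine ⟨liftWeights L p W, fun x hx => by rw [hfW x hx, modNet_liftWeights], ?_⟩
  calc weightsL2sq L p (liftWeights L p W) ≤ (M + 1) ^ 2 * weightsNNZ L p W :=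
        weightsL2sq_liftWeights_le hbounded
    _ ≤ (M + 1) ^ 2 * s := by gcongr
    _ = s * (M + 1) ^ 2 := mul_comm _ _

/-- `F_M(L,p,s) ⊆ G₂(L,p,s(M+1)²)`. -/
theorem sparse_subset_modL2 (L : ℕ) (p : ℕ → ℕ) (hp : p (L + 1) = 1)
    (M s : ℝ) (hM : 0 < M) (hs : 0 < s) :
    sparseReluClass L p M s ⊆ modClassL2 L p (s * (M + 1) ^ 2) :=
  sparse_subset_modL2_general L p M s
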